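/- arXiv:0902.0993 — 2 statements merged into one kernel-verified Lean document; each statement's English description precedes it below -/
import Mathlib

section
/- In a locally symmetric implication algebra M with involution T satisfying (x → T(x)) ∨ y ∨ T(y) = 1, with Δ(b,a) = b ∧ T(b→a) for a ≤ b: Δ(b, Δ(b,a)) = a. -/
/-- An implication algebra: a join-semilattice with greatest element 1 in which
every interval [a,1] is a Boolean algebra, with `imp b a` (written b → a) the
relative complement of b over a. It satisfies (x→y)→y = x ⊔ y and
x→(y→z) = y→(x→z), and for a ≤ b, b → a is the complement of b in [a,1]. -/
class ImplicationAlgebra (α : Type*) extends SemilatticeSup α, OrderTop α where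
  imp : α → α → α
  imp_imp : ∀ a b : α, imp (imp a b) b = a ⊔ b
  exchange : ∀ a b c : α, imp a (imp b c) = imp b (imp a c)
  imp_glb : ∀ a b : α, a ≤ b → IsGLB {b, imp b a} a
  imp_sup : ∀ a b : α, a ≤ b → b ⊔ imp b a = ⊤

open ImplicationAlgebra

section IA
variable {α : Type*} [ImplicationAlgebra α]

lemma ia_top_imp (x : α) : imp ⊤ x = x := by
  have h := imp_glb x ⊤ le_top
  have h1 : x ≤ imp ⊤ x := h.1 (Set.mem_insert_of_mem _ rfl)
  have h2 : imp ⊤ x ≤ x := h.2 (by rintro w (rfl | rfl) <;> simp)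
  exact le_antisymm h2 h1

lemma ia_imp_self (x : α) : imp x x = ⊤ := by
  have h := imp_imp (⊤ : α) x
  rw [ia_top_imp, top_sup_eq] at h
  exact h

lemma ia_imp_top (x : α) : imp x ⊤ = ⊤ := by
  have h1 : imp (imp x ⊤) ⊤ = ⊤ := by rw [imp_imp, sup_top_eq]
  have h2 := exchange x (imp x ⊤) ⊤
  rw [h1, ia_imp_self] at h2
  -- h2 : imp x ⊤ = ⊤
  exact h2

lemma ia_le_imp (x y : α) : x ≤ imp y x := by
  have h : imp x (imp y x) = ⊤ := by rw [exchange, ia_imp_self, ia_imp_top]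
  have h2 := imp_imp x (imp y x)
  rw [h, ia_top_imp] at h2
  exact le_sup_left.trans_eq h2.symm

lemma ia_le_iff {a b : α} : a ≤ b ↔ imp a b = ⊤ := by
  constructor
  · intro hab
    have h1 : imp (imp a b) b = b := by rw [imp_imp, sup_eq_right.mpr hab]
    have h2 := imp_imp (imp a b) b
    rw [h1, ia_imp_self] at h2
    -- h2 : ⊤ = imp a b ⊔ b
    rw [sup_eq_left.mpr (ia_le_imp b a)] at h2
    exact h2.symm
  · intro h
    have h2 := imp_imp a b
    rw [h, ia_top_imp] at h2
    exact le_sup_left.trans_eq h2.symm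

lemma ia_imp_le_imp_left {a b : α} (c : α) (h : a ≤ b) : imp b c ≤ imp a c := by
  rw [ia_le_iff, exchange, imp_imp]
  exact ia_le_iff.mp (h.trans le_sup_left)

lemma ia_imp_sup_eq (a b : α) : imp a b = imp (a ⊔ b) b := by
  have h1 : a ⊔ b = imp (imp a b) b := (imp_imp a b).symm
  rw [h1, imp_imp, sup_eq_left.mpr (ia_le_imp b a)]

lemma ia_imp_le_imp_right {b c : α} (a : α) (h : b ≤ c) : imp a b ≤ imp a c := by
  rw [ia_le_iff]
  have hcb : imp (imp c b) b = c := by rw [imp_imp, sup_eq_left.mpr h]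
  have key : imp (imp a b) c = imp (imp b a) (imp (imp c b) a) := by
    calc imp (imp a b) c = imp (imp a b) (imp (imp c b) b) := by rw [hcb]
      _ = imp (imp c b) (imp (imp a b) b) := exchange _ _ _
      _ = imp (imp c b) (a ⊔ b) := by rw [imp_imp]
      _ = imp (imp c b) (imp (imp b a) a) := by rw [imp_imp, sup_comm]
      _ = imp (imp b a) (imp (imp c b) a) := exchange _ _ _
  calc imp (imp a b) (imp a c) = imp a (imp (imp a b) c) := exchange _ _ _
    _ = imp a (imp (imp b a) (imp (imp c b) a)) := by rw [key]
    _ = imp (imp b a) (imp a (imp (imp c b) a)) := exchange _ _ _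
    _ = imp (imp b a) (imp (imp c b) (imp a a)) := by rw [exchange a (imp c b) a]
    _ = ⊤ := by rw [ia_imp_self, ia_imp_top, ia_imp_top]

lemma ia_le_of_imp_sup {b x : α} (h : imp b x ⊔ x = ⊤) : b ≤ x := by
  have h1 : b ⊔ x = x := by
    rw [← imp_imp b x, ia_imp_sup_eq (imp b x) x, h, ia_top_imp]
  exact le_sup_left.trans_eq h1

end IA


/-- In a locally symmetric implication algebra with involution T satisfying
(x → T x) ∨ y ∨ T y = 1, with Δ(b,a) = b ∧ T(b → a) for a ≤ b:
Δ(b, Δ(b,a)) = a. -/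
theorem locSym_delta_involutive {α : Type*} [ImplicationAlgebra α]
    (T : α → α) (hT2 : ∀ x, T (T x) = x)
    (hThom : ∀ x y : α, T (imp x y) = imp (T x) (T y))
    (hId : ∀ x y : α, imp x (T x) ⊔ y ⊔ T y = ⊤)
    (hloc : ∀ x y : α, y ≤ x → ∃ m, IsGLB {x, T (imp x y)} m)
    (a b d : α) (hab : a ≤ b) (hd : IsGLB {b, T (imp b a)} d) :
    IsGLB {b, T (imp b d)} a := by
  have Ttop : T (⊤ : α) = ⊤ := by
    have h := hThom (⊤ : α) ⊤
    rw [ia_top_imp] at h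
    rw [h, ia_imp_self]
  have Tmono : ∀ x y : α, x ≤ y → T x ≤ T y := by
    intro x y h
    rw [ia_le_iff] at h ⊢
    rw [← hThom, h, Ttop]
  set c := imp b a with hc
  have hglb_bc : IsGLB {b, c} a := imp_glb a b hab
  have hac : a ≤ c := ia_le_imp a b
  have hdb : d ≤ b := hd.1 (Set.mem_insert _ _)
  have hdTc : d ≤ T c := hd.1 (Set.mem_insert_of_mem _ rfl)
  have hd_lb : ∀ z : α, z ≤ b → z ≤ T c → z ≤ d := by
    intro z h1 h2
    exact hd.2 (by rintro w (rfl | rfl) <;> assumption)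
  -- Step D: b ≤ imp (T c) d
  set u := imp b d with hu
  set t' := imp (T c) d with ht'
  have hdu : d ≤ u := ia_le_imp d b
  have hdt' : d ≤ t' := ia_le_imp d (T c)
  have hub : imp u d = b := by rw [hu, imp_imp, sup_eq_left.mpr hdb]
  have ht'Tc : imp t' d = T c := by rw [ht', imp_imp, sup_eq_left.mpr hdTc]
  have hg1 : imp (u ⊔ t') d ≤ b := (ia_imp_le_imp_left d le_sup_left).trans_eq hub
  have hg2 : imp (u ⊔ t') d ≤ T c := (ia_imp_le_imp_left d le_sup_right).trans_eq ht'Tc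
  have hgd : imp (u ⊔ t') d = d := le_antisymm (hd_lb _ hg1 hg2) (ia_le_imp d _)
  have hsup : u ⊔ t' = ⊤ := by
    have h1 := imp_imp (u ⊔ t') d
    rw [hgd, ia_imp_self] at h1
    rw [sup_eq_left.mpr (hdu.trans le_sup_left)] at h1
    exact h1.symm
  have hbt' : b ≤ t' := by
    have h2 : imp u t' = t' := by rw [ia_imp_sup_eq u t', hsup, ia_top_imp]
    calc b = imp u d := hub.symm
      _ ≤ imp u t' := ia_imp_le_imp_right u hdt'
      _ = t' := h2
  -- Step (ii): a ≤ T (imp b d)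
  have hTaTc : T a ≤ T c := Tmono _ _ hac
  have hbTad : b ≤ imp (T a) d := hbt'.trans (ia_imp_le_imp_left d hTaTc)
  have hTa_bd : T a ≤ imp b d := by
    rw [ia_le_iff] at hbTad ⊢
    rw [exchange b (T a) d] at hbTad
    exact hbTad
  have hii : a ≤ T (imp b d) := by
    have h := Tmono _ _ hTa_bd
    rwa [hT2] at h
  -- Step: b ≤ Y := T b ⊔ c
  set Y := T b ⊔ c with hY
  have hbY : b ≤ Y := by
    have hid := hId b a
    have h1 : imp b (T b) ⊔ a ⊔ T a ≤ imp b Y ⊔ Y := by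
      apply sup_le (sup_le ?_ ?_) ?_
      · exact le_sup_of_le_left (ia_imp_le_imp_right b le_sup_left)
      · exact le_sup_of_le_right (hac.trans le_sup_right)
      · exact le_sup_of_le_right ((Tmono _ _ hab).trans le_sup_left)
    have h2 : imp b Y ⊔ Y = ⊤ := le_antisymm le_top (hid ▸ h1)
    exact ia_le_of_imp_sup h2
  -- assemble
  constructor
  · rintro w (rfl | rfl)
    · exact hab
    · exact hii
  · intro z hz
    have hzb : z ≤ b := hz (Set.mem_insert _ _)
    have hzw : z ≤ T (imp b d) := hz (Set.mem_insert_of_mem _ rfl)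
    have h1 : T z ≤ imp b d := by
      have h := Tmono _ _ hzw; rwa [hT2] at h
    have h2 : T z ≤ imp b (T c) := h1.trans (ia_imp_le_imp_right b hdTc)
    have h3 : z ≤ imp (T b) c := by
      have h := Tmono _ _ h2
      rwa [hT2, hThom, hT2] at h
    have h4 : z ≤ imp Y c := by rwa [hY, ← ia_imp_sup_eq]
    have h5 : z ≤ c := by
      refine (imp_glb c Y le_sup_right).2 ?_
      rintro w (rfl | rfl)
      · exact hzb.trans hbY
      · exact h4
    refine hglb_bc.2 ?_
    rintro w (rfl | rfl)
    · exact hzb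
    · exact h5
end

section
/- Let Δ be a Delta-operator on an implication algebra M, and for u define δ(u) = C(u, u ∨ Δ(1,u)) where C(a,x) = x → a computed in [u,1] (i.e. δ(u) = (u ∨ Δ(1,u)) → u). Then u ≤ v implies δ(u) ≤ δ(v). -/
open ImplicationAlgebra

/-- A Delta-operator on an implication algebra: a (partial, here totalized)
binary operation Δ(b,a), meaningful for a ≤ b, satisfying the axioms of
Definition 3.1: Δ(b,a) ≤ b; Δ(a,a) = a; Δ(b,Δ(b,a)) = a; monotonicity in the
second argument; Δ(c,Δ(b,a)) = Δ(Δ(c,b),Δ(c,a)); for a < b either Δ(b,a) = a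
or Δ(b,a) and a have no lower bound; and Δ(b,a) = b ∧ Δ(1, b → a). -/
structure IsDeltaOperator {α : Type*} [ImplicationAlgebra α] (D : α → α → α) : Prop where
  delta_le : ∀ a b : α, a ≤ b → D b a ≤ b
  delta_refl : ∀ a : α, D a a = a
  delta_delta : ∀ a b : α, a ≤ b → D b (D b a) = a
  delta_mono : ∀ a b c : α, a ≤ b → b ≤ c → D c a ≤ D c b
  delta_comm : ∀ a b c : α, a ≤ b → b ≤ c → D c (D b a) = D (D c b) (D c a)
  delta_dichot : ∀ a b : α, a < b → D b a = a ∨ ¬∃ p, p ≤ a ∧ p ≤ D b a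
  delta_meet : ∀ a b : α, a ≤ b → IsGLB {b, D ⊤ (imp b a)} (D b a)

/-- δ(u) = (u ∨ Δ(1,u)) → u, the largest x ≥ u with Δ(x,u) = u. -/
noncomputable def deltaHat {α : Type*} [ImplicationAlgebra α] (D : α → α → α) (u : α) : α :=
  ImplicationAlgebra.imp (u ⊔ D ⊤ u) u

section ImpLemmas
variable {α : Type*} [ImplicationAlgebra α]

/-- `imp ⊤ a = a`. -/
lemma IA.imp_top_left (a : α) : imp (⊤ : α) a = a := by
  have h := imp_glb a ⊤ le_top
  have h1 : a ≤ imp (⊤ : α) a := h.1 (by simp [Set.mem_insert_iff])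
  have h2 : imp (⊤ : α) a ≤ a := h.2 (by
    intro x hx
    rcases hx with rfl | hx
    · exact le_top
    · simp_all)
  exact le_antisymm h2 h1

/-- `imp a a = ⊤`. -/
lemma IA.imp_self (a : α) : imp a a = (⊤ : α) := by
  have h := imp_imp (⊤ : α) a
  rw [IA.imp_top_left] at h
  simpa using h

/-- `a ≤ b ↔ imp a b = ⊤`. -/
lemma IA.le_iff_imp (a b : α) : a ≤ b ↔ imp a b = (⊤ : α) := by
  constructor
  · intro h
    have hb : imp (imp a b) b = b := by rw [imp_imp]; exact sup_eq_right.mpr h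
    calc imp a b = imp a (imp (imp a b) b) := by rw [hb]
      _ = imp (imp a b) (imp a b) := exchange a (imp a b) b
      _ = ⊤ := IA.imp_self _
  · intro h
    have : a ⊔ b = b := by
      have := imp_imp a b
      rw [h, IA.imp_top_left] at this
      exact this.symm
    exact le_sup_left.trans this.le

/-- Adjoint-style exchange: `a ≤ imp b c ↔ b ≤ imp a c`. -/
lemma IA.le_imp_comm {a b c : α} : a ≤ imp b c ↔ b ≤ imp a c := by
  rw [IA.le_iff_imp, IA.le_iff_imp, exchange]

/-- `a ≤ imp b a`. -/
lemma IA.le_imp_self (a b : α) : a ≤ imp b a := by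
  rw [IA.le_imp_comm, IA.imp_self]
  exact le_top

/-- `imp` is monotone in the second argument. -/
lemma IA.imp_mono_right {a b : α} (c : α) (hab : a ≤ b) : imp c a ≤ imp c b := by
  have hb : imp (imp b a) a = b := by
    rw [imp_imp]; exact sup_eq_left.mpr hab
  have key : imp c b = imp (imp b a) (imp c a) := by
    conv_lhs => rw [← hb]
    exact exchange c (imp b a) a
  rw [IA.le_iff_imp, key, exchange, IA.imp_self]
  rw [← IA.le_iff_imp]
  exact le_top

/-- `imp` is antitone in the first argument. -/
lemma IA.imp_anti_left {a b : α} (c : α) (hab : a ≤ b) : imp b c ≤ imp a c := by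
  rw [IA.le_imp_comm]
  calc a ≤ b ⊔ c := le_trans hab le_sup_left
    _ = imp (imp b c) c := (imp_imp b c).symm

end ImpLemmas

section DeltaLemmas
variable {α : Type*} [ImplicationAlgebra α] {D : α → α → α}

/-- `D ⊤` is an involution. -/
lemma IA.d1_invol (hD : IsDeltaOperator D) (a : α) : D ⊤ (D ⊤ a) = a :=
  hD.delta_delta a ⊤ le_top

/-- `D ⊤` is monotone. -/
lemma IA.d1_mono (hD : IsDeltaOperator D) {a b : α} (h : a ≤ b) : D ⊤ a ≤ D ⊤ b :=
  hD.delta_mono a b ⊤ h le_top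

/-- `D ⊤ ⊤ = ⊤`. -/
lemma IA.d1_top (hD : IsDeltaOperator D) : D ⊤ (⊤ : α) = ⊤ := by
  have h : (⊤ : α) = D ⊤ (D ⊤ ⊤) := (IA.d1_invol hD ⊤).symm
  exact le_antisymm le_top (h.le.trans (IA.d1_mono hD le_top))

/-- `deltaHat D w = imp (D ⊤ w) w`. -/
lemma IA.deltaHat_eq (hD : IsDeltaOperator D) (w : α) :
    deltaHat D w = imp (D ⊤ w) w := by
  unfold deltaHat
  have h1 : w ⊔ D ⊤ w = imp (imp (D ⊤ w) w) w := by
    rw [imp_imp, sup_comm]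
  rw [h1, imp_imp]
  exact sup_eq_left.mpr (IA.le_imp_self w (D ⊤ w))

end DeltaLemmas

/-- For a Delta-operator Δ on an implication algebra, δ is order-preserving:
u ≤ v implies δ(u) ≤ δ(v). -/
theorem deltaHat_mono {α : Type*} [ImplicationAlgebra α]
    (D : α → α → α) (hD : IsDeltaOperator D) (u v : α) (huv : u ≤ v) :
    deltaHat D u ≤ deltaHat D v := by
  rw [IA.deltaHat_eq hD, IA.deltaHat_eq hD]
  set e : α := imp (D ⊤ u) u with he
  set g : α := imp e v with hg
  -- v ≤ g
  have hvg : v ≤ g := IA.le_imp_self v e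
  -- D ⊤ u ≤ g
  have hDug : D ⊤ u ≤ g := by
    have h1 : imp e u ≤ g := IA.imp_mono_right e huv
    have h2 : imp e u = D ⊤ u ⊔ u := by rw [he, imp_imp]
    exact le_sup_left.trans (h2.symm.le.trans h1)
  -- u ≤ D ⊤ g
  have hug : u ≤ D ⊤ g := by
    have := IA.d1_mono hD hDug
    rwa [IA.d1_invol hD] at this
  -- v ≤ D ⊤ g
  have hvDg : v ≤ D ⊤ g := by
    rcases eq_or_lt_of_le (le_top : g ≤ ⊤) with hgt | hgt
    · rw [hgt, IA.d1_top hD]; exact le_top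
    · rcases hD.delta_dichot g ⊤ hgt with h | h
      · rw [h]; exact hvg
      · exact absurd ⟨u, huv.trans hvg, hug⟩ h
  -- D ⊤ v ≤ g = imp e v, hence e ≤ imp (D ⊤ v) v
  have hDvg : D ⊤ v ≤ imp e v := by
    have := IA.d1_mono hD hvDg
    rwa [IA.d1_invol hD] at this
  exact IA.le_imp_comm.mp hDvg
end
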